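/- Let L ⊂ ℝ^n be a well-rounded full-rank lattice and A = {a₁,…,aₙ} a set of n linearly independent minimal vectors of L. Then the orthogonality defect of A satisfies δ(A) = ‖L‖ⁿ/|det(a₁,…,aₙ)| ≤ 2ⁿ/ωₙ, where ωₙ is the volume of the unit ball in ℝ^n. -/

import Mathlib

open MeasureTheory Metric Set
open scoped ENNReal

/-- The line through two points `x` and `y` in Euclidean space. -/
def lineThrough {n : ℕ} (x y : EuclideanSpace ℝ (Fin n)) : Set (EuclideanSpace ℝ (Fin n)) :=
  {p | ∃ t : ℝ, p = x + t • (y - x)}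

/-- `x` illuminates the boundary point `y` of the convex body `K`:
the segment `[x,y]` misses the interior of `K`, but the line through `x,y` meets it. -/
def Illum {n : ℕ} (K : Set (EuclideanSpace ℝ (Fin n))) (x y : EuclideanSpace ℝ (Fin n)) : Prop :=
  segment ℝ x y ∩ interior K = ∅ ∧ (lineThrough x y ∩ interior K).Nonempty

/-- A set `S` illuminates `K` if every boundary point of `K` is illuminated by some point of `S`. -/
def IllumSet {n : ℕ} (S K : Set (EuclideanSpace ℝ (Fin n))) : Prop :=
  ∀ y ∈ frontier K, ∃ x ∈ S, Illum K x y

/-- `K` has smooth boundary: a unique supporting hyperplane (unit outward normal)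
at every boundary point. -/
def SmoothBody {n : ℕ} (K : Set (EuclideanSpace ℝ (Fin n))) : Prop :=
  ∀ y ∈ frontier K, ∃! u : EuclideanSpace ℝ (Fin n),
    ‖u‖ = 1 ∧ ∀ z ∈ K, (inner ℝ u z : ℝ) ≤ inner ℝ u y

/-- The inradius of a set: supremum of radii of closed balls contained in it. -/
noncomputable def inradius {n : ℕ} (P : Set (EuclideanSpace ℝ (Fin n))) : ℝ :=
  sSup {r : ℝ | 0 ≤ r ∧ ∃ c, Metric.closedBall c r ⊆ P}

/-- The determinant of the matrix whose columns are the vectors `a 0, …, a (n-1)`. -/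
noncomputable def detv {n : ℕ} (a : Fin n → EuclideanSpace ℝ (Fin n)) : ℝ :=
  (Matrix.of fun i j => a j i).det

/-!
Minkowski's convex body theorem applied to the open ball of radius `‖L‖`, which contains no
nonzero lattice point, gives `‖L‖ⁿ ωₙ ≤ 2ⁿ covol(L)`. The vectors `aᵢ` span a sublattice of `L`,
so `|det(a₁, …, aₙ)|` is a nonzero integer multiple of `covol(L)`.
-/

open Module

section Minkowski

variable {E : Type*} [NormedAddCommGroup E] [NormedSpace ℝ E] [FiniteDimensional ℝ E]
  [MeasurableSpace E] [BorelSpace E] (μ : Measure E) [μ.IsAddHaarMeasure]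

theorem ofReal_pow_mul_measure_ball_le_of_forall_le_norm {L : AddSubgroup E} [Countable L]
    {F : Set E} (fund : IsAddFundamentalDomain L F μ) {r : ℝ} (hr : 0 < r)
    (hmin : ∀ x ∈ L, x ≠ 0 → r ≤ ‖x‖) :
    ENNReal.ofReal (r ^ finrank ℝ E) * μ (ball 0 1) ≤ μ F * 2 ^ finrank ℝ E := by
  by_contra! hlt
  rw [← μ.addHaar_ball_of_pos 0 hr] at hlt
  obtain ⟨x, hx0, hxr⟩ := exists_ne_zero_mem_lattice_of_measure_mul_two_pow_lt_measure fund
    (fun y hy => by simpa using hy) (convex_ball 0 r) hlt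
  exact (hmin x x.2 (by exact_mod_cast hx0)).not_gt (mem_ball_zero_iff.mp hxr)

end Minkowski

namespace Module.Basis

variable {ι M : Type*} [Fintype ι] [DecidableEq ι] [AddCommGroup M] [Module ℝ M]

theorem one_le_abs_det_of_mem_span_int (b v : Basis ι ℝ M)
    (hv : ∀ i, v i ∈ Submodule.span ℤ (range b)) : 1 ≤ |b.det v| := by
  choose M hM using fun i j => (b.mem_span_iff_repr_mem ℤ (v j)).mp (hv j) i
  have hdet : b.det v = (Matrix.of M).det := by
    rw [Basis.det_apply, ← eq_intCast (algebraMap ℤ ℝ), RingHom.map_det]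
    congr 1
    ext i j
    simp [Basis.toMatrix_apply, ← hM]
  have hM0 : (Matrix.of M).det ≠ 0 := by
    intro h
    exact (b.isUnit_det v).ne_zero (by rw [hdet, h, Int.cast_zero])
  rw [hdet, ← Int.cast_abs]
  exact_mod_cast Int.one_le_abs hM0

end Module.Basis

theorem ZSpan.measure_fundamentalDomain_le_of_mem_span_int {ι E : Type*} [Fintype ι]
    [DecidableEq ι] [NormedAddCommGroup E] [NormedSpace ℝ E] [MeasurableSpace E] [BorelSpace E]
    (μ : Measure E) [μ.IsAddHaarMeasure] (b v : Basis ι ℝ E)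
    (hv : ∀ i, v i ∈ Submodule.span ℤ (range b)) :
    μ (ZSpan.fundamentalDomain b) ≤ μ (ZSpan.fundamentalDomain v) := by
  rw [ZSpan.measure_fundamentalDomain v μ b]
  refine le_mul_of_one_le_left' ?_
  rw [← ENNReal.ofReal_one]
  exact ENNReal.ofReal_le_ofReal (b.one_le_abs_det_of_mem_span_int v hv)

theorem detv_eq_det {n : ℕ} (a : Fin n → EuclideanSpace ℝ (Fin n)) :
    detv a = (EuclideanSpace.basisFun (Fin n) ℝ).toBasis.det a := by
  rw [Basis.det_apply, detv]
  congr 1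

theorem volume_fundamentalDomain_eq_abs_detv {n : ℕ}
    (v : Basis (Fin n) ℝ (EuclideanSpace ℝ (Fin n))) :
    volume (ZSpan.fundamentalDomain v) = ENNReal.ofReal |detv v| := by
  set e := EuclideanSpace.basisFun (Fin n) ℝ
  rw [ZSpan.measure_fundamentalDomain v volume e.toBasis, detv_eq_det,
    measure_congr (ZSpan.fundamentalDomain_ae_parallelepiped e.toBasis volume),
    OrthonormalBasis.coe_toBasis, e.volume_parallelepiped, mul_one]

theorem well_rounded_defect_bound_general {n : ℕ}
    (b : Module.Basis (Fin n) ℝ (EuclideanSpace ℝ (Fin n))) (lam : ℝ)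
    (hlam : IsLeast {r : ℝ | ∃ x ∈ Submodule.span ℤ (Set.range ⇑b), x ≠ 0 ∧ ‖x‖ = r} lam)
    (a : Fin n → EuclideanSpace ℝ (Fin n)) (ha : LinearIndependent ℝ a)
    (haL : ∀ i, a i ∈ Submodule.span ℤ (Set.range ⇑b)) :
    lam ^ n / |detv a| ≤ 2 ^ n
      / (volume (Metric.ball (0 : EuclideanSpace ℝ (Fin n)) 1)).toReal := by
  set L := Submodule.span ℤ (Set.range ⇑b)
  obtain ⟨x₀, -, hx₀, rfl⟩ := hlam.1
  have hmin : ∀ x ∈ L.toAddSubgroup, x ≠ 0 → ‖x₀‖ ≤ ‖x‖ := fun x hx hx0 =>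
    hlam.2 ⟨x, hx, hx0, rfl⟩
  set ba := basisOfLinearIndependentOfCardEqFinrank' a ha (by simp)
  have hba : ⇑ba = a := coe_basisOfLinearIndependentOfCardEqFinrank' a ha _
  have hω : 0 < (volume (ball (0 : EuclideanSpace ℝ (Fin n)) 1)).toReal :=
    ENNReal.toReal_pos (measure_ball_pos volume 0 one_pos).ne' measure_ball_lt_top.ne
  have hdet : 0 < |detv a| := by
    rw [← hba, detv_eq_det]
    exact abs_pos.mpr (Basis.isUnit_det _ _).ne_zero
  have key : ENNReal.ofReal (‖x₀‖ ^ n) * volume (ball (0 : EuclideanSpace ℝ (Fin n)) 1)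
      ≤ ENNReal.ofReal |detv a| * 2 ^ n := by
    have : Countable L.toAddSubgroup := inferInstanceAs (Countable L)
    calc _ ≤ volume (ZSpan.fundamentalDomain b) * 2 ^ n := by
          simpa using ofReal_pow_mul_measure_ball_le_of_forall_le_norm volume
            (ZSpan.isAddFundamentalDomain' b volume) (norm_pos_iff.mpr hx₀) hmin
      _ ≤ volume (ZSpan.fundamentalDomain ba) * 2 ^ n := by
          gcongr ?_ * _
          exact ZSpan.measure_fundamentalDomain_le_of_mem_span_int volume b ba (hba ▸ haL)
      _ = ENNReal.ofReal |detv a| * 2 ^ n := by rw [volume_fundamentalDomain_eq_abs_detv, hba]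
  rw [div_le_div_iff₀ hdet hω]
  simpa [ENNReal.toReal_mul, ENNReal.toReal_ofReal, abs_nonneg, mul_comm] using
    ENNReal.toReal_mono (by finiteness) key

/-- For a well-rounded lattice, the orthogonality defect of a set of n linearly
independent minimal vectors is at most 2ⁿ/ωₙ. -/
theorem well_rounded_defect_bound {n : ℕ} (hn : 0 < n)
    (b : Module.Basis (Fin n) ℝ (EuclideanSpace ℝ (Fin n))) (lam : ℝ)
    (hlam : IsLeast {r : ℝ | ∃ x ∈ Submodule.span ℤ (Set.range ⇑b), x ≠ 0 ∧ ‖x‖ = r} lam)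
    (a : Fin n → EuclideanSpace ℝ (Fin n)) (ha : LinearIndependent ℝ a)
    (haL : ∀ i, a i ∈ Submodule.span ℤ (Set.range ⇑b)) (hnorm : ∀ i, ‖a i‖ = lam) :
    lam ^ n / |detv a| ≤ 2 ^ n
      / (volume (Metric.ball (0 : EuclideanSpace ℝ (Fin n)) 1)).toReal :=
  well_rounded_defect_bound_general b lam hlam a ha haL
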